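/- Let R = (<₁, <₂, <₃) be a standard representation of a finite set V with |V| ≥ 4, with <ᵢ-maximum elements a₁, a₂, a₃, and let b be the <₁-maximum element of V \ {a₁}. Let w₋ be the <₂-largest neighbor of a₁ in Σ₂(R) satisfying w₋ <₂ b, and let w₊ be the <₂-smallest neighbor of a₁ in Σ₂(R) satisfying b <₂ w₊ (both exist). Then the set of common neighbors of a₁ and b in Σ₂(R) is exactly {w₋, w₊}; in particular a₁ and b have exactly two common neighbors. -/

import Mathlib

open SimpleGraph

variable {V : Type*}

/-- The graph Σ₂(R) for a triple of linear orders R = (l₁, l₂, l₃) on V: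
`x` and `y` are adjacent iff every other vertex `z` lies above both `x` and `y`
in one of the three orders. -/
def Sigma2 (l₁ l₂ l₃ : LinearOrder V) : SimpleGraph V where
  Adj x y := x ≠ y ∧ ∀ z, z ≠ x → z ≠ y →
    (l₁.lt x z ∧ l₁.lt y z) ∨ (l₂.lt x z ∧ l₂.lt y z) ∨ (l₃.lt x z ∧ l₃.lt y z)
  symm := ⟨by
    rintro x y ⟨hxy, h⟩
    exact ⟨hxy.symm, fun z hzy hzx => by rcases h z hzx hzy with h|h|h <;> tauto⟩⟩
  loopless := ⟨fun x h => h.1 rfl⟩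

/-- The three orders have empty intersection: for distinct x, y, some order has x below y. -/
def IsRep (l₁ l₂ l₃ : LinearOrder V) : Prop :=
  ∀ x y : V, x ≠ y → l₁.lt x y ∨ l₂.lt x y ∨ l₃.lt x y

/-- `a` is the maximum element of the linear order `l`. -/
def IsMaxOf (l : LinearOrder V) (a : V) : Prop := ∀ x, x ≠ a → l.lt x a

/-- `a` is among the two smallest elements of `l`: at most one element lies below `a`. -/
def AmongTwoSmallest (l : LinearOrder V) (a : V) : Prop :=
  ∀ x y, l.lt x a → l.lt y a → x = y

/-- `R = (l₁, l₂, l₃)` is a standard representation with `<ᵢ`-maxima `a₁, a₂, a₃`. -/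
structure IsStdRep (l₁ l₂ l₃ : LinearOrder V) (a₁ a₂ a₃ : V) : Prop where
  rep : IsRep l₁ l₂ l₃
  top₁ : IsMaxOf l₁ a₁
  top₂ : IsMaxOf l₂ a₂
  top₃ : IsMaxOf l₃ a₃
  a₁_small₂ : AmongTwoSmallest l₂ a₁
  a₁_small₃ : AmongTwoSmallest l₃ a₁
  a₂_small₁ : AmongTwoSmallest l₁ a₂
  a₂_small₃ : AmongTwoSmallest l₃ a₂
  a₃_small₁ : AmongTwoSmallest l₁ a₃
  a₃_small₂ : AmongTwoSmallest l₂ a₃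

/-- The restriction of a linear order on `V` to `V \ {b}`. -/
def restrictOrder (l : LinearOrder V) (b : V) : LinearOrder {x : V // x ≠ b} :=
  @LinearOrder.lift' _ _ l Subtype.val Subtype.val_injective

/-!
The neighbours of `a₁` in `Σ₂(R)` are exactly the minimal elements of `V ∖ {a₁}` for the product
of `<₂` and `<₃`; they form a chain that increases in `<₂` and decreases in `<₃`, and `b` belongs
to it. Two consecutive elements of the chain are adjacent, while a chain element lying strictly
`<₂`-between two adjacent vertices has to lie `<₁`-above both of them, which is impossible when one
of them is `b`. So the common neighbours of `a₁` and `b` are the two neighbours `w₋`, `w₊` of `b`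
in the chain; they exist because `a₃` lies `<₂`-below `b` and `a₂` lies `<₃`-below `b`.
-/

namespace LinearOrder

variable (l : LinearOrder V) {x y z : V}

theorem lt_trans (hxy : l.lt x y) (hyz : l.lt y z) : l.lt x z := by
  let _ := l; exact _root_.lt_trans hxy hyz

theorem lt_asymm (h : l.lt x y) : ¬l.lt y x := by
  let _ := l; exact _root_.lt_asymm h

theorem ne_of_lt (h : l.lt x y) : x ≠ y := by
  let _ := l; exact _root_.ne_of_lt h

theorem lt_or_gt_of_ne (h : x ≠ y) : l.lt x y ∨ l.lt y x := by
  let _ := l; exact h.lt_or_gt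

theorem lt_of_le_of_lt (hxy : l.le x y) (hyz : l.lt y z) : l.lt x z := by
  let _ := l; exact _root_.lt_of_le_of_lt hxy hyz

theorem le_of_lt_of_le (hxy : l.lt x y) (hyz : l.le y z) : l.le x z := by
  let _ := l; exact (_root_.lt_of_lt_of_le hxy hyz).le

theorem exists_min [Finite V] {P : V → Prop} (h : ∃ x, P x) :
    ∃ m, P m ∧ ∀ x, P x → x ≠ m → l.lt m x := by
  let _ := l
  obtain ⟨x₀, hx₀⟩ := h
  have : Nonempty {x // P x} := ⟨⟨x₀, hx₀⟩⟩
  obtain ⟨⟨m, hm⟩, hmin⟩ := Finite.exists_min (fun x : {x // P x} => x.1)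
  exact ⟨m, hm, fun x hx hne => lt_of_le_of_ne (hmin ⟨x, hx⟩) hne.symm⟩

theorem exists_max [Finite V] {P : V → Prop} (h : ∃ x, P x) :
    ∃ m, P m ∧ ∀ x, P x → x ≠ m → l.lt x m := by
  let _ := l
  obtain ⟨x₀, hx₀⟩ := h
  have : Nonempty {x // P x} := ⟨⟨x₀, hx₀⟩⟩
  obtain ⟨⟨m, hm⟩, hmax⟩ := Finite.exists_max (fun x : {x // P x} => x.1)
  exact ⟨m, hm, fun x hx hne => lt_of_le_of_ne (hmax ⟨x, hx⟩) hne⟩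

end LinearOrder

theorem AmongTwoSmallest.lt_of_lt {l : LinearOrder V} {a z : V} (ha : AmongTwoSmallest l a)
    (hz : l.lt z a) {w : V} (hw : w ≠ z) : l.lt z w := by
  rcases l.lt_or_gt_of_ne hw with h | h
  · exact absurd (ha w z (l.lt_trans h hz) hz) hw
  · exact h

theorem AmongTwoSmallest.lt_of_ne {l : LinearOrder V} {a c x : V} (ha : AmongTwoSmallest l a)
    (hc : AmongTwoSmallest l c) (hac : a ≠ c) (hxa : x ≠ a) (hxc : x ≠ c) : l.lt a x := by
  rcases l.lt_or_gt_of_ne hxa with hx | hx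
  · rcases l.lt_or_gt_of_ne hac with h | h
    · exact absurd (hc x a (l.lt_trans hx h) h) hxa
    · exact absurd (ha x c hx h) hxc
  · exact hx

theorem exists_pair_ne_of_four_le_card [Fintype V] (hV : 4 ≤ Fintype.card V) (a b : V) :
    ∃ x y : V, x ≠ y ∧ x ≠ a ∧ x ≠ b ∧ y ≠ a ∧ y ≠ b := by
  classical
  have hcard : 1 < ({a, b}ᶜ : Finset V).card := by
    have := Finset.card_le_two (a := a) (b := b)
    rw [Finset.card_compl]
    omega
  obtain ⟨x, hx, y, hy, hxy⟩ := Finset.one_lt_card.mp hcard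
  simp only [Finset.mem_compl, Finset.mem_insert, Finset.mem_singleton, not_or] at hx hy
  exact ⟨x, y, hxy, hx.1, hx.2, hy.1, hy.2⟩

theorem IsMaxOf.ne_and_lt_of_four_le_card [Fintype V] {p q r : LinearOrder V} {a b c : V}
    (hrc : IsMaxOf r c) (hV : 4 ≤ Fintype.card V) (hqa : AmongTwoSmallest q a)
    (hra : AmongTwoSmallest r a) (hqc : AmongTwoSmallest q c) (hpc : AmongTwoSmallest p c)
    (hba : b ≠ a) (hb : ∀ x, x ≠ a → x ≠ b → p.lt x b) : c ≠ a ∧ q.lt c b := by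
  obtain ⟨x, y, hxy, hxa, hxb, hya, hyb⟩ := exists_pair_ne_of_four_le_card hV a b
  have hca : c ≠ a := by
    rintro rfl
    exact hxy (hra x y (hrc x hxa) (hrc y hya))
  have hbc : b ≠ c := by
    rintro rfl
    exact hxy (hpc x y (hb x hxa hxb) (hb y hya hyb))
  exact ⟨hca, hqc.lt_of_ne hqa hca hbc hba⟩

def IsParetoMin (p q : LinearOrder V) (S : Set V) (w : V) : Prop :=
  w ∈ S ∧ ∀ z ∈ S, ¬(p.lt z w ∧ q.lt z w)

namespace IsParetoMin

variable {p q : LinearOrder V} {S : Set V} {w z : V}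

theorem swap (hw : IsParetoMin p q S w) : IsParetoMin q p S w :=
  ⟨hw.1, fun z hz h => hw.2 z hz h.symm⟩

theorem lt_of_lt (hw : IsParetoMin p q S w) (hz : z ∈ S) (h : p.lt z w) : q.lt w z := by
  rcases q.lt_or_gt_of_ne (p.ne_of_lt h) with hq | hq
  · exact absurd ⟨h, hq⟩ (hw.2 z hz)
  · exact hq

theorem lt_of_amongTwoSmallest {a : V} (hw : IsParetoMin p q {x | x ≠ a} w)
    (ha : AmongTwoSmallest p a) (hz : z ≠ a) (hzw : z ≠ w) (hq : q.lt z w) : p.lt a z := by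
  rcases p.lt_or_gt_of_ne hz with h | h
  · exact absurd ⟨ha.lt_of_lt h hzw.symm, hq⟩ (hw.2 z hz)
  · exact h

end IsParetoMin

theorem exists_isParetoMin_le [Finite V] (p q : LinearOrder V) {S : Set V} {x : V} (hx : x ∈ S) :
    ∃ m, IsParetoMin p q S m ∧ p.le m x ∧ q.le m x := by
  obtain ⟨m, ⟨hmS, hmp, hmq⟩, hmin⟩ :=
    p.exists_min (P := fun y => y ∈ S ∧ p.le y x ∧ q.le y x) ⟨x, hx, p.le_refl x, q.le_refl x⟩
  refine ⟨m, ⟨hmS, fun z hz ⟨hzp, hzq⟩ => ?_⟩, hmp, hmq⟩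
  have hzm := hmin z ⟨hz, p.le_of_lt_of_le hzp hmp, q.le_of_lt_of_le hzq hmq⟩ (p.ne_of_lt hzp)
  exact p.lt_asymm hzp hzm

theorem IsParetoMin.exists_isParetoMin_between [Finite V] {p q : LinearOrder V} {S : Set V}
    {x y u : V} (hx : IsParetoMin p q S x) (hu : u ∈ S) (hpu : p.lt u y) (hqu : q.lt u x) :
    ∃ m, IsParetoMin p q S m ∧ p.lt x m ∧ p.lt m y := by
  obtain ⟨m, hm, hmp, hmq⟩ := exists_isParetoMin_le p q hu
  have hmx : q.lt m x := q.lt_of_le_of_lt hmq hqu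
  refine ⟨m, hm, ?_, p.lt_of_le_of_lt hmp hpu⟩
  rcases p.lt_or_gt_of_ne (q.ne_of_lt hmx) with h | h
  · exact absurd ⟨h, hmx⟩ (hx.2 m hm.1)
  · exact h

section Sigma2

variable {l₁ l₂ l₃ : LinearOrder V} {a₁ : V}

theorem sigma2_adj_top_iff (hrep : IsRep l₁ l₂ l₃) (htop : IsMaxOf l₁ a₁)
    (h₂ : AmongTwoSmallest l₂ a₁) (h₃ : AmongTwoSmallest l₃ a₁) {w : V} :
    (Sigma2 l₁ l₂ l₃).Adj a₁ w ↔ IsParetoMin l₂ l₃ {x | x ≠ a₁} w := by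
  constructor
  · rintro ⟨hne, hadj⟩
    refine ⟨hne.symm, fun z hz ⟨hz₂, hz₃⟩ => ?_⟩
    rcases hadj z hz (l₂.ne_of_lt hz₂) with ⟨h, -⟩ | ⟨-, h⟩ | ⟨-, h⟩
    · exact l₁.lt_asymm (htop z hz) h
    · exact l₂.lt_asymm hz₂ h
    · exact l₃.lt_asymm hz₃ h
  · intro hw
    refine ⟨Ne.symm hw.1, fun z hz hzw => ?_⟩
    rcases l₂.lt_or_gt_of_ne hzw.symm with hw₂ | hz₂ <;>
      rcases l₃.lt_or_gt_of_ne hzw.symm with hw₃ | hz₃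
    · rcases hrep a₁ z hz.symm with h | h | h
      · exact absurd (htop z hz) (l₁.lt_asymm h)
      · exact Or.inr (Or.inl ⟨h, hw₂⟩)
      · exact Or.inr (Or.inr ⟨h, hw₃⟩)
    · exact Or.inr (Or.inl ⟨hw.lt_of_amongTwoSmallest h₂ hz hzw hz₃, hw₂⟩)
    · exact Or.inr (Or.inr ⟨hw.swap.lt_of_amongTwoSmallest h₃ hz hzw hz₂, hw₃⟩)
    · exact absurd ⟨hz₂, hz₃⟩ (hw.2 z hz)

theorem isParetoMin_of_isMax_compl (hrep : IsRep l₁ l₂ l₃) {b : V} (hba : b ≠ a₁)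
    (hb : ∀ x, x ≠ a₁ → x ≠ b → l₁.lt x b) : IsParetoMin l₂ l₃ {x | x ≠ a₁} b := by
  refine ⟨hba, fun z hz ⟨hz₂, hz₃⟩ => ?_⟩
  rcases hrep b z (l₂.ne_of_lt hz₂).symm with h | h | h
  · exact l₁.lt_asymm (hb z hz (l₂.ne_of_lt hz₂)) h
  · exact l₂.lt_asymm hz₂ h
  · exact l₃.lt_asymm hz₃ h

theorem sigma2_adj_of_consecutive [Finite V] (htop : IsMaxOf l₁ a₁) {x y : V}
    (hx : IsParetoMin l₂ l₃ {x | x ≠ a₁} x) (hy : IsParetoMin l₂ l₃ {x | x ≠ a₁} y)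
    (hxy : l₂.lt x y)
    (hcons : ∀ m, IsParetoMin l₂ l₃ {x | x ≠ a₁} m → l₂.lt x m → ¬l₂.lt m y) :
    (Sigma2 l₁ l₂ l₃).Adj x y := by
  have hyx : l₃.lt y x := hy.lt_of_lt hx.1 hxy
  refine ⟨l₂.ne_of_lt hxy, fun u hux huy => ?_⟩
  by_cases hu : u = a₁
  · subst hu
    exact Or.inl ⟨htop x hx.1, htop y hy.1⟩
  rcases l₂.lt_or_gt_of_ne huy with hu₂ | hu₂
  · have hxu : l₃.lt x u := by
      rcases l₃.lt_or_gt_of_ne hux with h | h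
      · obtain ⟨m, hm, hxm, hmy⟩ := hx.exists_isParetoMin_between hu hu₂ h
        exact absurd hmy (hcons m hm hxm)
      · exact h
    exact Or.inr (Or.inr ⟨hxu, l₃.lt_trans hyx hxu⟩)
  · exact Or.inr (Or.inl ⟨l₂.lt_trans hxy hu₂, hu₂⟩)

theorem lt_of_sigma2_adj_of_between {S : Set V} {x y m : V} (hadj : (Sigma2 l₁ l₂ l₃).Adj x y)
    (hx : x ∈ S) (hm : IsParetoMin l₂ l₃ S m) (hxm : l₂.lt x m) (hmy : l₂.lt m y) :
    l₁.lt x m ∧ l₁.lt y m := by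
  rcases hadj.2 m (l₂.ne_of_lt hxm).symm (l₂.ne_of_lt hmy) with h | ⟨-, h⟩ | ⟨h, -⟩
  · exact h
  · exact absurd h (l₂.lt_asymm hmy)
  · exact absurd h (l₃.lt_asymm (hm.lt_of_lt hx hxm))

theorem IsStdRep.exists_isParetoMin_lt_and_gt [Fintype V] {a₂ a₃ b : V}
    (hR : IsStdRep l₁ l₂ l₃ a₁ a₂ a₃) (hV : 4 ≤ Fintype.card V) (hba : b ≠ a₁)
    (hb : ∀ x, x ≠ a₁ → x ≠ b → l₁.lt x b) :
    (∃ w, IsParetoMin l₂ l₃ {x | x ≠ a₁} w ∧ l₂.lt w b) ∧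
      ∃ w, IsParetoMin l₂ l₃ {x | x ≠ a₁} w ∧ l₂.lt b w := by
  obtain ⟨rep, -, top₂, top₃, a1s₂, a1s₃, a2s₁, a2s₃, a3s₁, a3s₂⟩ := hR
  obtain ⟨ha₃, ha₃b⟩ := top₃.ne_and_lt_of_four_le_card hV a1s₂ a1s₃ a3s₂ a3s₁ hba hb
  obtain ⟨ha₂, ha₂b⟩ := top₂.ne_and_lt_of_four_le_card hV a1s₃ a1s₂ a2s₃ a2s₁ hba hb
  constructor
  · obtain ⟨m, hm, hm₂, -⟩ := exists_isParetoMin_le l₂ l₃ (S := {x | x ≠ a₁}) ha₃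
    exact ⟨m, hm, l₂.lt_of_le_of_lt hm₂ ha₃b⟩
  · obtain ⟨m, hm, -, hm₃⟩ := exists_isParetoMin_le l₂ l₃ (S := {x | x ≠ a₁}) ha₂
    have hb' := isParetoMin_of_isMax_compl (l₃ := l₃) rep hba hb
    exact ⟨m, hm, hb'.swap.lt_of_lt hm.1 (l₃.lt_of_le_of_lt hm₃ ha₂b)⟩

end Sigma2

/-- With b the <₁-maximum of V \ {a₁}, the <₂-largest neighbor wlo of a₁
below b and the <₂-smallest neighbor whi of a₁ above b both exist, and the common
neighbors of a₁ and b in Σ₂(R) are exactly {wlo, whi}; in particular there are exactly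
two of them. -/
theorem stmt6 {V : Type*} [Fintype V] (hV : 4 ≤ Fintype.card V)
    (l₁ l₂ l₃ : LinearOrder V) (a₁ a₂ a₃ : V)
    (hR : IsStdRep l₁ l₂ l₃ a₁ a₂ a₃)
    (b : V) (hba : b ≠ a₁) (hb : ∀ x, x ≠ a₁ → x ≠ b → l₁.lt x b) :
    ∃ wlo whi : V,
      ((Sigma2 l₁ l₂ l₃).Adj a₁ wlo ∧ l₂.lt wlo b ∧
        ∀ w, (Sigma2 l₁ l₂ l₃).Adj a₁ w → l₂.lt w b → w ≠ wlo → l₂.lt w wlo) ∧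
      ((Sigma2 l₁ l₂ l₃).Adj a₁ whi ∧ l₂.lt b whi ∧
        ∀ w, (Sigma2 l₁ l₂ l₃).Adj a₁ w → l₂.lt b w → w ≠ whi → l₂.lt whi w) ∧
      wlo ≠ whi ∧
      ∀ z : V, ((Sigma2 l₁ l₂ l₃).Adj a₁ z ∧ (Sigma2 l₁ l₂ l₃).Adj b z) ↔
        (z = wlo ∨ z = whi) := by
  obtain ⟨hlo, hhi⟩ := hR.exists_isParetoMin_lt_and_gt hV hba hb
  have hN w := sigma2_adj_top_iff (w := w) hR.rep hR.top₁ hR.a₁_small₂ hR.a₁_small₃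
  have hNb := isParetoMin_of_isMax_compl (l₃ := l₃) hR.rep hba hb
  obtain ⟨wlo, ⟨hwlo, hwlob⟩, hwlo_max⟩ := l₂.exists_max hlo
  obtain ⟨whi, ⟨hwhi, hbwhi⟩, hwhi_min⟩ := l₂.exists_min hhi
  refine ⟨wlo, whi, ⟨(hN wlo).2 hwlo, hwlob, fun w hw hwb => hwlo_max w ⟨(hN w).1 hw, hwb⟩⟩,
    ⟨(hN whi).2 hwhi, hbwhi, fun w hw hbw => hwhi_min w ⟨(hN w).1 hw, hbw⟩⟩,
    l₂.ne_of_lt (l₂.lt_trans hwlob hbwhi), fun z => ⟨?_, ?_⟩⟩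
  · rintro ⟨hza, hbz⟩
    have hz := (hN z).1 hza
    rcases l₂.lt_or_gt_of_ne hbz.ne.symm with hzb | hzb
    · refine Or.inl (by_contra fun hne => ?_)
      have := lt_of_sigma2_adj_of_between hbz.symm hz.1 hwlo (hwlo_max z ⟨hz, hzb⟩ hne) hwlob
      exact l₁.lt_asymm (hb wlo hwlo.1 (l₂.ne_of_lt hwlob)) this.2
    · refine Or.inr (by_contra fun hne => ?_)
      have := lt_of_sigma2_adj_of_between hbz hba hwhi hbwhi (hwhi_min z ⟨hz, hzb⟩ hne)
      exact l₁.lt_asymm (hb whi hwhi.1 (l₂.ne_of_lt hbwhi).symm) this.1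
  · rintro (rfl | rfl)
    · refine ⟨(hN z).2 hwlo, (sigma2_adj_of_consecutive hR.top₁ hwlo hNb hwlob ?_).symm⟩
      exact fun m hm hzm hmb => l₂.lt_asymm hzm (hwlo_max m ⟨hm, hmb⟩ (l₂.ne_of_lt hzm).symm)
    · refine ⟨(hN z).2 hwhi, sigma2_adj_of_consecutive hR.top₁ hNb hwhi hbwhi ?_⟩
      exact fun m hm hbm hmz => l₂.lt_asymm hmz (hwhi_min m ⟨hm, hbm⟩ (l₂.ne_of_lt hmz))
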